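/- For any instance of the generalised minimum spanning tree problem with m clusters, the expected optimization time of the tree-based (1+1) EA is O(m^{3(m-1)}). In particular, from any non-optimal spanning tree of the cluster graph, the probability that a single mutation step produces an optimal spanning tree is at least (1/e) * m^{-3(m-1)}. Furthermore, for any k >= 1, the probability that an optimal solution has not been found within e*k*m^{3(m-1)} iterations is less than exp(-k). Hence the tree-based (1+1) EA is a fixed-parameter evolutionary algorithm for GMSTP with respect to the parameter m. -/

import Mathlib

open scoped ENNReal BigOperators Classical

noncomputable section

/-- Probability that a (1+1) evolutionary algorithm with initial distribution `μ0` and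
one-step transition kernel `K` follows the trajectory prefix `x 0, x 1, …, x t`. -/
def trajProb {State : Type*} (μ0 : State → ℝ≥0∞) (K : State → State → ℝ≥0∞)
    {t : ℕ} (x : Fin (t + 1) → State) : ℝ≥0∞ :=
  μ0 (x 0) * ∏ i : Fin t, K (x i.castSucc) (x i.succ)

/-- `survival μ0 K Opt t` is the probability `P(T > t)` that no optimal state (w.r.t. the
goal predicate `Opt`) occurs among the first `t+1` states `X 0, …, X t` of the Markov chain
with initial distribution `μ0` and transition kernel `K`; here `T = inf {t | Opt (X t)}`
is the optimization time. -/
def survival {State : Type*} (μ0 : State → ℝ≥0∞) (K : State → State → ℝ≥0∞)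
    (Opt : State → Prop) (t : ℕ) : ℝ≥0∞ :=
  ∑' x : Fin (t + 1) → State, if ∀ i, ¬ Opt (x i) then trajProb μ0 K x else 0

/-- The expected optimization time `E[T] = ∑_{t ≥ 0} P(T > t)` of the Markov chain with
initial distribution `μ0` and transition kernel `K`, where `T = inf {t | Opt (X t)}`. -/
def expectedOptTime {State : Type*} (μ0 : State → ℝ≥0∞) (K : State → State → ℝ≥0∞)
    (Opt : State → Prop) : ℝ≥0∞ :=
  ∑' t : ℕ, survival μ0 K Opt t

/-- The one-step transition kernel of a (1+1) EA: from the current solution `x`, an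
offspring `y` is sampled from the mutation distribution `mutate x`; it is accepted (i.e. the
chain moves to `y`) iff `cost y ≤ cost x`, otherwise the chain stays at `x`. -/
def eaKernel {State : Type*} (mutate : State → State → ℝ≥0∞) (cost : State → ℝ≥0∞)
    (x y : State) : ℝ≥0∞ :=
  (if cost y ≤ cost x then mutate x y else 0) +
    (if y = x then ∑' z : State, (if cost z ≤ cost x then 0 else mutate x z) else 0)

/-- Mutation distribution of the cluster-based (1+1) EA with spanned nodes representation:
independently for each cluster `i`, with probability `1/m` the node chosen in cluster `i`
is replaced by a node drawn uniformly at random from `Vc i` (and is kept unchanged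
otherwise). `clusterMut m Vc x y` is the probability that mutating `x` yields `y`. -/
def clusterMut (m : ℕ) {V : Type*} [DecidableEq V] (Vc : Fin m → Finset V)
    (x y : Fin m → V) : ℝ≥0∞ :=
  ∏ i : Fin m,
    ((if y i ∈ Vc i then (m : ℝ≥0∞)⁻¹ * ((Vc i).card : ℝ≥0∞)⁻¹ else 0) +
      (if y i = x i then 1 - (m : ℝ≥0∞)⁻¹ else 0))

/-- The cost of the minimum spanning tree of the subgraph induced by the node selection
`x : Fin m → V` (one node per cluster), where `c` is the (symmetric, possibly infinite)
edge-cost function: the infimum over all trees `G` on the `m` clusters of the total cost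
of the corresponding edges. -/
def mstCost {m : ℕ} {V : Type*} (c : V → V → ℝ≥0∞) (x : Fin m → V) : ℝ≥0∞ :=
  ⨅ (G : SimpleGraph (Fin m)) (_ : G.IsTree),
    (∑ i : Fin m, ∑ j : Fin m, if G.Adj i j then c (x i) (x j) else 0) / 2

/-- `E` is (the edge set of) a spanning tree of the complete graph on the `m` clusters. -/
def IsSpanningTree (m : ℕ) (E : Finset (Sym2 (Fin m))) : Prop :=
  (∀ e ∈ E, ¬ e.IsDiag) ∧ (SimpleGraph.fromEdgeSet (E : Set (Sym2 (Fin m)))).IsTree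

/-- The edges of the complete graph on the `m` clusters that are not in `E`. -/
def nonTreeEdges (m : ℕ) (E : Finset (Sym2 (Fin m))) : Finset (Sym2 (Fin m)) :=
  Finset.univ.filter (fun e => ¬ e.IsDiag ∧ e ∉ E)

/-- The edges of the cycle created by inserting the edge `e` into the spanning tree `E`:
those edges `f` of `E ∪ {e}` whose removal from `E ∪ {e}` leaves a spanning tree. -/
def cycleEdges (m : ℕ) (E : Finset (Sym2 (Fin m))) (e : Sym2 (Fin m)) :
    Finset (Sym2 (Fin m)) :=
  (insert e E).filter (fun f => IsSpanningTree m ((insert e E).erase f))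

/-- The transition probability of a single edge swap: an edge `e` not in the current tree
`E` is chosen uniformly at random and inserted, and an edge chosen uniformly at random from
the cycle thereby created is removed. -/
def swapK (m : ℕ) (E E' : Finset (Sym2 (Fin m))) : ℝ≥0∞ :=
  ∑ e ∈ nonTreeEdges m E, ((nonTreeEdges m E).card : ℝ≥0∞)⁻¹ *
    ∑ f ∈ cycleEdges m E e, ((cycleEdges m E e).card : ℝ≥0∞)⁻¹ *
      (if E' = (insert e E).erase f then 1 else 0)

/-- `k`-fold composition of the edge-swap transition kernel. -/
def swapKpow (m : ℕ) : ℕ → Finset (Sym2 (Fin m)) → Finset (Sym2 (Fin m)) → ℝ≥0∞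
  | 0, E, E' => if E' = E then 1 else 0
  | k + 1, E, E' => ∑' E'' : Finset (Sym2 (Fin m)), swapKpow m k E E'' * swapK m E'' E'

/-- The Poisson distribution with expectation `1`: `P(K = k) = exp(-1)/k!`. -/
def poisson1 (k : ℕ) : ℝ≥0∞ := ENNReal.ofReal (Real.exp (-1) / Nat.factorial k)

/-- Mutation distribution of the tree-based (1+1) EA: `K ~ Poisson(1)` edge swaps are
applied to the current spanning tree. -/
def treeMut (m : ℕ) (E E' : Finset (Sym2 (Fin m))) : ℝ≥0∞ :=
  ∑' k : ℕ, poisson1 k * swapKpow m k E E'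

/-- The cost of the edge `e` between two clusters, given the node selection `p` and the
(symmetric) node-cost function `c`. -/
def eCost {V : Type*} (c : V → V → ℝ≥0∞) {m : ℕ} (p : Fin m → V) (e : Sym2 (Fin m)) :
    ℝ≥0∞ :=
  ⨅ (i : Fin m) (j : Fin m) (_ : e = s(i, j)), c (p i) (p j)

/-- The lower-level value of an upper-level solution `E` (a spanning tree of the cluster
graph): the minimum over node selections `p i ∈ Vc i` of the total cost of the edges of `E`
(the lower-level problem is solved optimally). -/
def treeValue {V : Type*} (c : V → V → ℝ≥0∞) {m : ℕ} (Vc : Fin m → Finset V)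
    (E : Finset (Sym2 (Fin m))) : ℝ≥0∞ :=
  ⨅ (p : Fin m → V) (_ : ∀ i, p i ∈ Vc i), ∑ e ∈ E, eCost c p e

/-- Optimal upper-level solutions: spanning trees of the cluster graph whose lower-level
value is globally minimal. -/
def OptTree {V : Type*} (c : V → V → ℝ≥0∞) {m : ℕ} (Vc : Fin m → Finset V)
    (E : Finset (Sym2 (Fin m))) : Prop :=
  IsSpanningTree m E ∧ ∀ E', IsSpanningTree m E' → treeValue c Vc E ≤ treeValue c Vc E'

/-! Let `E*` be an optimal spanning tree and `d = |E* \ E| ≤ m - 1`. By the exchange property of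
spanning trees, every edge `e ∈ E* \ E` can be inserted into `E` together with the removal of an
edge `f ∉ E*` on the cycle it closes; such a swap has probability at least `m⁻³` (at most `m²`
insertable edges, at most `m` cycle edges) and brings the tree one edge closer to `E*`. Since the
missing edges may be inserted in any of `d!` orders, `d` swaps reach `E*` with probability at
least `d! m^{-3d}`, and `Poisson(1)` makes exactly `d` swaps with probability `1 / (e d!)`. So every
iteration finds an optimum with probability at least `s = e⁻¹ m^{-3(m-1)}`; optimal offspring are
always accepted, hence `P(T > t) ≤ (1 - s)^t`, which gives `E[T] ≤ 1/s` and
`P(T > N) ≤ (1 - s)^N < exp(-sN)`. -/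

open SimpleGraph

section MarkovChain

variable {S : Type*} (μ0 : S → ℝ≥0∞) (K : S → S → ℝ≥0∞)

lemma trajProb_snoc {t : ℕ} (x : Fin (t + 1) → S) (a : S) :
    trajProb μ0 K (Fin.snoc x a : Fin (t + 2) → S) = trajProb μ0 K x * K (x (Fin.last t)) a := by
  simp only [trajProb, Fin.prod_univ_castSucc, Fin.snoc_castSucc, Fin.succ_castSucc, Fin.succ_last,
    Fin.snoc_last, mul_assoc]
  rfl

variable {K}

lemma invariant_of_trajProb_ne_zero {Inv : S → Prop} (h0 : ∀ x, μ0 x ≠ 0 → Inv x)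
    (hK : ∀ x y, Inv x → K x y ≠ 0 → Inv y) {t : ℕ} {x : Fin (t + 1) → S}
    (hx : trajProb μ0 K x ≠ 0) (i : Fin (t + 1)) : Inv (x i) := by
  obtain ⟨hx0, hxK⟩ := mul_ne_zero_iff.mp hx
  induction i using Fin.induction with
  | zero => exact h0 _ hx0
  | succ i ih => exact hK _ _ ih (Finset.prod_ne_zero_iff.mp hxK i (Finset.mem_univ _))

variable (Opt : S → Prop)

lemma survival_zero_le (hμ0 : ∑' x, μ0 x ≤ 1) : survival μ0 K Opt 0 ≤ 1 := by
  refine le_trans ?_ hμ0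
  rw [survival, ← (Equiv.funUnique (Fin 1) S).symm.tsum_eq]
  refine ENNReal.tsum_le_tsum fun a => ?_
  split_ifs <;> simp [trajProb]

lemma survival_succ_le {Inv : S → Prop} {r : ℝ≥0∞} (h0 : ∀ x, μ0 x ≠ 0 → Inv x)
    (hK : ∀ x y, Inv x → K x y ≠ 0 → Inv y)
    (hrow : ∀ x, Inv x → ¬ Opt x → (∑' y, if Opt y then 0 else K x y) ≤ r) (t : ℕ) :
    survival μ0 K Opt (t + 1) ≤ r * survival μ0 K Opt t := by
  -- split each trajectory of length `t + 2` into its first `t + 1` states and its last state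
  rw [survival, ← (Fin.snocEquiv fun _ => S).tsum_eq, ENNReal.tsum_prod', ENNReal.tsum_comm,
    survival, ← ENNReal.tsum_mul_left]
  refine ENNReal.tsum_le_tsum fun x => ?_
  have hsplit : ∀ a, (if ∀ i, ¬ Opt ((Fin.snocEquiv fun _ => S) (a, x) i) then
      trajProb μ0 K ((Fin.snocEquiv fun _ => S) (a, x)) else 0) =
      (if ∀ i, ¬ Opt (x i) then trajProb μ0 K x else 0) *
        (if Opt a then 0 else K (x (Fin.last t)) a) := by
    intro a
    rw [show (Fin.snocEquiv fun _ => S) (a, x) = (Fin.snoc x a : Fin (t + 2) → S) from rfl,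
      trajProb_snoc]
    simp only [Fin.forall_iff_castSucc (n := t + 1), Fin.snoc_last, Fin.snoc_castSucc]
    split_ifs <;> simp_all
  rw [tsum_congr hsplit, ENNReal.tsum_mul_left, mul_comm]
  by_cases hx : (∀ i, ¬ Opt (x i)) ∧ trajProb μ0 K x ≠ 0
  · rw [if_pos hx.1]
    exact mul_le_mul_left (hrow _ (invariant_of_trajProb_ne_zero μ0 h0 hK hx.2 _)
      (hx.1 _)) _
  · rw [not_and_or, not_ne_iff] at hx
    rcases hx with hx | hx <;> simp [hx]

lemma survival_le_pow {Inv : S → Prop} {r : ℝ≥0∞} (hμ0 : ∑' x, μ0 x ≤ 1)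
    (h0 : ∀ x, μ0 x ≠ 0 → Inv x) (hK : ∀ x y, Inv x → K x y ≠ 0 → Inv y)
    (hrow : ∀ x, Inv x → ¬ Opt x → (∑' y, if Opt y then 0 else K x y) ≤ r) (t : ℕ) :
    survival μ0 K Opt t ≤ r ^ t := by
  induction t with
  | zero => simpa using survival_zero_le μ0 Opt hμ0
  | succ t ih =>
    calc survival μ0 K Opt (t + 1) ≤ r * survival μ0 K Opt t :=
          survival_succ_le μ0 Opt h0 hK hrow t
      _ ≤ r * r ^ t := by gcongr
      _ = r ^ (t + 1) := (pow_succ' r t).symm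

theorem survival_le_one_sub_pow {Inv : S → Prop} {s : ℝ≥0∞} (hμ0 : ∑' x, μ0 x ≤ 1)
    (h0 : ∀ x, μ0 x ≠ 0 → Inv x) (hK : ∀ x y, Inv x → K x y ≠ 0 → Inv y)
    (hmass : ∀ x, ∑' y, K x y ≤ 1)
    (hs : ∀ x, Inv x → ¬ Opt x → s ≤ ∑' y, if Opt y then K x y else 0) (t : ℕ) :
    survival μ0 K Opt t ≤ (1 - s) ^ t := by
  refine survival_le_pow μ0 Opt hμ0 h0 hK (fun x hx hnx => ?_) t
  have hsplit : (∑' y, if Opt y then 0 else K x y) + (∑' y, if Opt y then K x y else 0) =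
      ∑' y, K x y := by
    rw [← ENNReal.tsum_add]
    congr with y
    split_ifs <;> simp
  have hmass' : (∑' y, if Opt y then 0 else K x y) + s ≤ 1 :=
    calc _ ≤ (∑' y, if Opt y then 0 else K x y) + (∑' y, if Opt y then K x y else 0) := by
          gcongr; exact hs x hx hnx
      _ ≤ 1 := hsplit ▸ hmass x
  exact ENNReal.le_sub_of_add_le_right (ne_top_of_le_ne_top ENNReal.one_ne_top
    (le_add_self.trans hmass')) hmass'

lemma expectedOptTime_le_inv {s : ℝ≥0∞} (hs : s ≤ 1)
    (hsurv : ∀ t, survival μ0 K Opt t ≤ (1 - s) ^ t) : expectedOptTime μ0 K Opt ≤ s⁻¹ :=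
  calc expectedOptTime μ0 K Opt ≤ ∑' t : ℕ, (1 - s) ^ t := ENNReal.tsum_le_tsum hsurv
    _ = s⁻¹ := by rw [ENNReal.tsum_geometric, ENNReal.sub_sub_cancel ENNReal.one_ne_top hs]

end MarkovChain

section EvolutionaryAlgorithm

variable {S : Type*} (mutate : S → S → ℝ≥0∞) (cost : S → ℝ≥0∞)

lemma tsum_eaKernel (x : S) : ∑' y, eaKernel mutate cost x y = ∑' y, mutate x y := by
  simp only [eaKernel]
  rw [ENNReal.tsum_add, tsum_ite_eq, ← ENNReal.tsum_add]
  congr with y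
  split_ifs <;> simp

lemma le_eaKernel_of_cost_le {x y : S} (h : cost y ≤ cost x) :
    mutate x y ≤ eaKernel mutate cost x y := by
  simp [eaKernel, h]

lemma eaKernel_ne_zero {x y : S} (h : eaKernel mutate cost x y ≠ 0) (hyx : y ≠ x) :
    mutate x y ≠ 0 := by
  simp_all [eaKernel]

theorem survival_eaKernel_le_one_sub_pow (μ0 : S → ℝ≥0∞) {Opt Inv : S → Prop} {s : ℝ≥0∞}
    (hμ0 : ∑' x, μ0 x ≤ 1) (h0 : ∀ x, μ0 x ≠ 0 → Inv x)
    (hmass : ∀ x, ∑' y, mutate x y ≤ 1) (hInv : ∀ x y, Inv x → mutate x y ≠ 0 → Inv y)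
    (hOpt : ∀ x y, Inv x → Opt y → cost y ≤ cost x)
    (hs : ∀ x, Inv x → ¬ Opt x → s ≤ ∑' y, if Opt y then mutate x y else 0) (t : ℕ) :
    survival μ0 (eaKernel mutate cost) Opt t ≤ (1 - s) ^ t := by
  refine survival_le_one_sub_pow μ0 Opt hμ0 h0 (fun x y hx hxy => ?_)
    (fun x => (tsum_eaKernel mutate cost x).trans_le (hmass x))
    (fun x hx hnx => (hs x hx hnx).trans (ENNReal.tsum_le_tsum fun y => ?_)) t
  · by_cases hyx : y = x
    · exact hyx ▸ hx
    · exact hInv x y hx (eaKernel_ne_zero mutate cost hxy hyx)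
  · split_ifs with hy
    · exact le_eaKernel_of_cost_le mutate cost (hOpt x y hx hy)
    · exact le_rfl

end EvolutionaryAlgorithm

lemma SimpleGraph.edgeSet_fromEdgeSet_of_forall_not_isDiag {V : Type*} {s : Set (Sym2 V)}
    (hs : ∀ e ∈ s, ¬ e.IsDiag) : (fromEdgeSet s).edgeSet = s := by
  rw [edgeSet_fromEdgeSet, sdiff_eq_left, Set.disjoint_left]
  exact hs

lemma SimpleGraph.IsAcyclic.exists_mem_edges_notMem_edgeSet {V : Type*}
    {G T : SimpleGraph V} (hT : T.IsAcyclic) {a b : V} (hab : T.Adj a b) (p : G.Walk a b)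
    (hp : s(a, b) ∉ p.edges) : ∃ f ∈ p.edges, f ∉ T.edgeSet := by
  by_contra! hpT
  have hbridge := isAcyclic_iff_forall_isBridge.mp hT (T.mem_edgeSet.mpr hab)
  have := isBridge_iff_forall_walk_mem_edges.mp hbridge (p.transfer T hpT)
  rw [Walk.edges_transfer] at this
  exact hp this

lemma SimpleGraph.Walk.mem_of_mem_edges_fromEdgeSet {V : Type*} {s : Set (Sym2 V)} {a b : V}
    (p : (fromEdgeSet s).Walk a b) {f : Sym2 V} (hf : f ∈ p.edges) : f ∈ s := by
  have := p.edges_subset_edgeSet hf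
  rw [edgeSet_fromEdgeSet] at this
  exact this.1

lemma Finset.sdiff_insert_erase_of_notMem {α : Type*} [DecidableEq α] {E F : Finset α} {e f : α}
    (hfF : f ∉ F) : F \ (insert e E).erase f = (F \ E).erase e := by
  ext g
  simp only [Finset.mem_sdiff, Finset.mem_erase, Finset.mem_insert]
  grind

lemma Finset.sum_inv_card_mul_le_one {α : Type*} (s : Finset α) {g : α → ℝ≥0∞}
    (hg : ∀ x ∈ s, g x ≤ 1) : ∑ x ∈ s, (s.card : ℝ≥0∞)⁻¹ * g x ≤ 1 :=
  calc ∑ x ∈ s, (s.card : ℝ≥0∞)⁻¹ * g x ≤ ∑ _x ∈ s, (s.card : ℝ≥0∞)⁻¹ * 1 :=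
        Finset.sum_le_sum fun x hx => mul_le_mul_right (hg x hx) _
    _ ≤ 1 := by simp

section SpanningTree

variable {m : ℕ}

lemma isSpanningTree_iff {E : Finset (Sym2 (Fin m))} :
    IsSpanningTree m E ↔ (∀ e ∈ E, ¬ e.IsDiag) ∧
      (fromEdgeSet (E : Set (Sym2 (Fin m)))).Connected ∧ E.card + 1 = m := by
  unfold IsSpanningTree
  refine and_congr_right fun hE => ?_
  rw [isTree_iff_connected_and_card, edgeSet_fromEdgeSet_of_forall_not_isDiag hE]
  simp

lemma IsSpanningTree.card_add_one {E : Finset (Sym2 (Fin m))} (hE : IsSpanningTree m E) :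
    E.card + 1 = m :=
  (isSpanningTree_iff.mp hE).2.2

lemma IsSpanningTree.insert_erase_of_mem_path {E : Finset (Sym2 (Fin m))}
    (hE : IsSpanningTree m E) {a b : Fin m} (hab : a ≠ b) (heE : s(a, b) ∉ E)
    (P : (fromEdgeSet (E : Set (Sym2 (Fin m)))).Path a b) {f : Sym2 (Fin m)}
    (hf : f ∈ P.1.edges) : IsSpanningTree m ((insert s(a, b) E).erase f) := by
  obtain ⟨hEdiag, hEconn, hEcard⟩ := isSpanningTree_iff.mp hE
  have hfE : f ∈ E := Walk.mem_of_mem_edges_fromEdgeSet P.1 hf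
  set H := fromEdgeSet ((insert s(a, b) E : Finset (Sym2 (Fin m))) : Set (Sym2 (Fin m)))
  have hle : fromEdgeSet (E : Set (Sym2 (Fin m))) ≤ H :=
    fromEdgeSet_mono (by simp [Set.subset_insert])
  -- `f` lies on the cycle formed by `P` and the new edge, so it is not a bridge of `H`
  have hcycle : (Walk.cons (show H.Adj b a by simp [H, Sym2.eq_swap, hab.symm])
      (P.1.mapLe hle)).IsCycle := by
    refine Path.cons_isCycle (p := ⟨_, P.2.mapLe hle⟩) _ ?_
    rw [Walk.edges_mapLe_eq_edges, Sym2.eq_swap]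
    exact fun h => heE (Walk.mem_of_mem_edges_fromEdgeSet P.1 h)
  have hfbridge : ¬ H.IsBridge f := fun h => h.notMem_edges_of_isCycle hcycle (by simp [hf])
  refine isSpanningTree_iff.mpr ⟨fun e he => ?_, ?_, ?_⟩
  · obtain rfl | he := Finset.mem_insert.mp (Finset.mem_of_mem_erase he)
    · simpa using hab
    · exact hEdiag e he
  · have hHconn : H.Connected := hEconn.mono hle
    induction f using Sym2.ind with
    | _ u v =>
      convert hHconn.connected_delete_edge_of_not_isBridge hfbridge using 1
      simp [H, deleteEdges, fromEdgeSet_sdiff]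
  · rw [Finset.card_erase_of_mem (Finset.mem_insert_of_mem hfE), Finset.card_insert_of_notMem heE]
    omega

lemma IsSpanningTree.exists_exchange {E F : Finset (Sym2 (Fin m))} (hE : IsSpanningTree m E)
    (hF : IsSpanningTree m F) {e : Sym2 (Fin m)} (heF : e ∈ F) (heE : e ∉ E) :
    ∃ f ∈ E, f ∉ F ∧ IsSpanningTree m ((insert e E).erase f) := by
  induction e using Sym2.ind with
  | _ a b =>
  have hab : a ≠ b := fun h => hF.1 _ heF (by simp [h])
  let P := ((isSpanningTree_iff.mp hE).2.1.preconnected a b).some.toPath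
  have hPe : s(a, b) ∉ P.1.edges := fun h => heE (Walk.mem_of_mem_edges_fromEdgeSet P.1 h)
  obtain ⟨f, hfP, hfF⟩ :=
    hF.2.isAcyclic.exists_mem_edges_notMem_edgeSet (by simpa [hab] using heF) P.1 hPe
  refine ⟨f, Walk.mem_of_mem_edges_fromEdgeSet P.1 hfP, fun h => hfF ?_,
    IsSpanningTree.insert_erase_of_mem_path hE hab heE P hfP⟩
  rw [edgeSet_fromEdgeSet_of_forall_not_isDiag hF.1]
  exact h

lemma IsSpanningTree.one_le {E : Finset (Sym2 (Fin m))} (hE : IsSpanningTree m E) : 1 ≤ m := by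
  have := hE.card_add_one
  omega

lemma card_nonTreeEdges_le (E : Finset (Sym2 (Fin m))) : (nonTreeEdges m E).card ≤ m ^ 2 :=
  calc (nonTreeEdges m E).card ≤ Fintype.card (Sym2 (Fin m)) := Finset.card_le_univ _
    _ ≤ Fintype.card (Fin m × Fin m) := Fintype.card_le_of_surjective _ Sym2.mk_surjective
    _ = m ^ 2 := by simp [sq]

lemma card_cycleEdges_le {E : Finset (Sym2 (Fin m))} (hE : IsSpanningTree m E)
    (e : Sym2 (Fin m)) : (cycleEdges m E e).card ≤ m :=
  calc (cycleEdges m E e).card ≤ (insert e E).card := Finset.card_filter_le _ _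
    _ ≤ E.card + 1 := Finset.card_insert_le _ _
    _ = m := hE.card_add_one

lemma tsum_swapK_le_one (E : Finset (Sym2 (Fin m))) : ∑' E', swapK m E E' ≤ 1 := by
  have hsum : ∑' E', swapK m E E' = ∑ e ∈ nonTreeEdges m E, ((nonTreeEdges m E).card : ℝ≥0∞)⁻¹ *
      ∑ f ∈ cycleEdges m E e, ((cycleEdges m E e).card : ℝ≥0∞)⁻¹ * 1 := by
    rw [tsum_fintype]
    unfold swapK
    rw [Finset.sum_comm]
    refine Finset.sum_congr rfl fun e _ => ?_
    rw [← Finset.mul_sum, Finset.sum_comm]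
    simp only [← Finset.mul_sum, Finset.sum_ite_eq', Finset.mem_univ, if_true]
  rw [hsum]
  exact Finset.sum_inv_card_mul_le_one _ fun _ _ =>
    Finset.sum_inv_card_mul_le_one _ fun _ _ => le_rfl

lemma inv_pow_three_le_swapK {E : Finset (Sym2 (Fin m))} (hE : IsSpanningTree m E)
    {e f : Sym2 (Fin m)} (he : e ∈ nonTreeEdges m E) (hf : f ∈ cycleEdges m E e) :
    ((m : ℝ≥0∞) ^ 3)⁻¹ ≤ swapK m E ((insert e E).erase f) := by
  have hm : (m : ℝ≥0∞) ≠ 0 := by have := hE.one_le; positivity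
  calc ((m : ℝ≥0∞) ^ 3)⁻¹ = ((m : ℝ≥0∞) ^ 2)⁻¹ * ((m : ℝ≥0∞)⁻¹ * 1) := by
        rw [mul_one, ← ENNReal.mul_inv (by simp [hm]) (by simp), ← pow_succ]
    _ ≤ ((nonTreeEdges m E).card : ℝ≥0∞)⁻¹ * (((cycleEdges m E e).card : ℝ≥0∞)⁻¹ * 1) := by
        gcongr
        · exact_mod_cast card_nonTreeEdges_le E
        · exact_mod_cast card_cycleEdges_le hE e
    _ ≤ swapK m E ((insert e E).erase f) := by
        refine le_trans ?_ (Finset.single_le_sum (fun _ _ => zero_le) he)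
        gcongr
        simpa using Finset.single_le_sum
          (f := fun f' => ((cycleEdges m E e).card : ℝ≥0∞)⁻¹ *
            if (insert e E).erase f = (insert e E).erase f' then 1 else 0)
          (fun _ _ => zero_le) hf

lemma IsSpanningTree.of_swapK_ne_zero {E E' : Finset (Sym2 (Fin m))} (h : swapK m E E' ≠ 0) :
    IsSpanningTree m E' := by
  obtain ⟨e, -, he⟩ := Finset.exists_ne_zero_of_sum_ne_zero h
  obtain ⟨f, hf, hf'⟩ := Finset.exists_ne_zero_of_sum_ne_zero (right_ne_zero_of_mul he)
  have hE' : E' = (insert e E).erase f := by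
    by_contra hne
    simp [hne] at hf'
  exact hE' ▸ (Finset.mem_filter.mp hf).2

lemma swapKpow_succ_eq_tsum_swapK_mul (k : ℕ) (E E' : Finset (Sym2 (Fin m))) :
    swapKpow m (k + 1) E E' = ∑' E'', swapK m E E'' * swapKpow m k E'' E' := by
  induction k generalizing E' with
  | zero => simp [swapKpow]
  | succ k ih =>
    rw [swapKpow]
    simp_rw [ih, ← ENNReal.tsum_mul_right, mul_assoc]
    rw [ENNReal.tsum_comm]
    simp_rw [ENNReal.tsum_mul_left]
    rfl

lemma tsum_swapKpow_le_one (k : ℕ) (E : Finset (Sym2 (Fin m))) :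
    ∑' E', swapKpow m k E E' ≤ 1 := by
  induction k generalizing E with
  | zero => simp [swapKpow]
  | succ k ih =>
    simp_rw [swapKpow_succ_eq_tsum_swapK_mul]
    rw [ENNReal.tsum_comm]
    simp_rw [ENNReal.tsum_mul_left]
    calc ∑' E'', swapK m E E'' * ∑' E', swapKpow m k E'' E' ≤ ∑' E'', swapK m E E'' * 1 := by
          gcongr with E''; exact ih E''
      _ ≤ 1 := by simpa using tsum_swapK_le_one E

lemma IsSpanningTree.of_swapKpow_ne_zero {k : ℕ} {E E' : Finset (Sym2 (Fin m))}
    (hE : IsSpanningTree m E) (h : swapKpow m k E E' ≠ 0) : IsSpanningTree m E' := by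
  cases k with
  | zero =>
    have hE' : E' = E := by by_contra hne; simp [swapKpow, hne] at h
    exact hE' ▸ hE
  | succ k =>
    obtain ⟨E'', hE''⟩ := not_forall.mp (mt ENNReal.tsum_eq_zero.mpr h)
    exact IsSpanningTree.of_swapK_ne_zero (right_ne_zero_of_mul hE'')

lemma factorial_mul_inv_pow_le_swapKpow (d : ℕ) {E F : Finset (Sym2 (Fin m))}
    (hE : IsSpanningTree m E) (hF : IsSpanningTree m F) (hd : (F \ E).card = d) :
    (d.factorial : ℝ≥0∞) * (((m : ℝ≥0∞) ^ 3)⁻¹) ^ d ≤ swapKpow m d E F := by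
  induction d generalizing E with
  | zero =>
    have hFE : F ⊆ E := Finset.sdiff_eq_empty_iff_subset.mp (Finset.card_eq_zero.mp hd)
    have hEF : F = E :=
      Finset.eq_of_subset_of_card_le hFE (by rw [← Nat.add_one_le_add_one_iff,
        hE.card_add_one, hF.card_add_one])
    simp [swapKpow, hEF]
  | succ d ih =>
    have hexch : ∀ e ∈ F \ E, ∃ f ∈ E, f ∉ F ∧ IsSpanningTree m ((insert e E).erase f) :=
      fun e he => hE.exists_exchange hF (Finset.mem_sdiff.mp he).1 (Finset.mem_sdiff.mp he).2
    choose! g hgE hgF hgT using hexch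
    set X : Sym2 (Fin m) → Finset (Sym2 (Fin m)) := fun e => (insert e E).erase (g e)
    have hXinj : Set.InjOn X (F \ E : Finset _) := by
      intro e₁ h₁ e₂ h₂ hX
      have hmem : e₁ ∈ X e₂ := hX ▸ Finset.mem_erase.mpr
        ⟨fun h => (Finset.mem_sdiff.mp h₁).2 (h ▸ hgE e₁ h₁), Finset.mem_insert_self _ _⟩
      rcases Finset.mem_insert.mp (Finset.mem_of_mem_erase hmem) with h | h
      · exact h
      · exact absurd h (Finset.mem_sdiff.mp h₁).2
    have hstep : ∀ e ∈ F \ E, ((m : ℝ≥0∞) ^ 3)⁻¹ * ((d.factorial : ℝ≥0∞) *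
        (((m : ℝ≥0∞) ^ 3)⁻¹) ^ d) ≤ swapK m E (X e) * swapKpow m d (X e) F := by
      intro e he
      obtain ⟨heF, heE⟩ := Finset.mem_sdiff.mp he
      gcongr
      · exact inv_pow_three_le_swapK hE (by simp [nonTreeEdges, hF.1 e heF, heE])
          (Finset.mem_filter.mpr ⟨Finset.mem_insert_of_mem (hgE e he), hgT e he⟩)
      · refine ih (hgT e he) ?_
        rw [Finset.sdiff_insert_erase_of_notMem (hgF e he), Finset.card_erase_of_mem he, hd,
          Nat.add_sub_cancel]
    calc ((d + 1).factorial : ℝ≥0∞) * (((m : ℝ≥0∞) ^ 3)⁻¹) ^ (d + 1)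
        = ∑ _e ∈ F \ E, ((m : ℝ≥0∞) ^ 3)⁻¹ * ((d.factorial : ℝ≥0∞) *
            (((m : ℝ≥0∞) ^ 3)⁻¹) ^ d) := by
          rw [Finset.sum_const, nsmul_eq_mul, hd, Nat.factorial_succ]
          push_cast
          ring
      _ ≤ ∑ e ∈ F \ E, swapK m E (X e) * swapKpow m d (X e) F := Finset.sum_le_sum hstep
      _ = ∑ E'' ∈ (F \ E).image X, swapK m E E'' * swapKpow m d E'' F := by
          rw [Finset.sum_image hXinj]
      _ ≤ swapKpow m (d + 1) E F := by
          rw [swapKpow_succ_eq_tsum_swapK_mul]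
          exact ENNReal.sum_le_tsum _

end SpanningTree

lemma tsum_poisson1 : ∑' k, poisson1 k = 1 := by
  have hsummable : Summable fun k : ℕ => Real.exp (-1) / k.factorial := by
    simpa [div_eq_mul_inv] using (Real.summable_pow_div_factorial 1).mul_left (Real.exp (-1))
  unfold poisson1
  rw [← ENNReal.ofReal_tsum_of_nonneg (fun k => by positivity) hsummable]
  simp_rw [div_eq_mul_inv, tsum_mul_left]
  have hexp : Real.exp 1 = ∑' k : ℕ, ((k.factorial : ℝ))⁻¹ := by
    simp [Real.exp_eq_exp_ℝ, NormedSpace.exp_eq_tsum_div, div_eq_mul_inv]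
  rw [← hexp, ← Real.exp_add]
  simp

lemma poisson1_mul_factorial (k : ℕ) :
    poisson1 k * k.factorial = ENNReal.ofReal (Real.exp (-1)) := by
  rw [poisson1, ← ENNReal.ofReal_natCast, ← ENNReal.ofReal_mul (by positivity),
    div_mul_cancel₀ _ (by positivity)]

section TreeEA

variable {m : ℕ}

lemma tsum_treeMut_le_one (E : Finset (Sym2 (Fin m))) : ∑' E', treeMut m E E' ≤ 1 := by
  unfold treeMut
  rw [ENNReal.tsum_comm]
  simp_rw [ENNReal.tsum_mul_left]
  calc ∑' k, poisson1 k * ∑' E', swapKpow m k E E' ≤ ∑' k, poisson1 k * 1 := by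
        gcongr with k; exact tsum_swapKpow_le_one k E
    _ = 1 := by simpa using tsum_poisson1

lemma IsSpanningTree.of_treeMut_ne_zero {E E' : Finset (Sym2 (Fin m))} (hE : IsSpanningTree m E)
    (h : treeMut m E E' ≠ 0) : IsSpanningTree m E' := by
  obtain ⟨k, hk⟩ := not_forall.mp (mt ENNReal.tsum_eq_zero.mpr h)
  exact hE.of_swapKpow_ne_zero (right_ne_zero_of_mul hk)

variable {V : Type*} (c : V → V → ℝ≥0∞) (Vc : Fin m → Finset V)

lemma IsSpanningTree.exists_optTree {E : Finset (Sym2 (Fin m))} (hE : IsSpanningTree m E) :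
    ∃ E', OptTree c Vc E' := by
  obtain ⟨E', hE', hmin⟩ := Finset.exists_min_image {F | IsSpanningTree m F} (treeValue c Vc)
    ⟨E, by simpa using hE⟩
  exact ⟨E', by simpa using hE', fun F hF => hmin F (by simpa using hF)⟩

theorem IsSpanningTree.inv_exp_mul_inv_pow_le_tsum_treeMut {E : Finset (Sym2 (Fin m))}
    (hE : IsSpanningTree m E) :
    (ENNReal.ofReal (Real.exp 1))⁻¹ * ((m : ℝ≥0∞) ^ (3 * (m - 1)))⁻¹ ≤
      ∑' E', if OptTree c Vc E' then treeMut m E E' else 0 := by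
  obtain ⟨Eo, hEo⟩ := hE.exists_optTree c Vc
  set d := (Eo \ E).card
  have hd : d ≤ m - 1 := by
    have := hEo.1.card_add_one
    have := Finset.card_le_card (Finset.sdiff_subset (s := Eo) (t := E))
    omega
  calc (ENNReal.ofReal (Real.exp 1))⁻¹ * ((m : ℝ≥0∞) ^ (3 * (m - 1)))⁻¹
      ≤ ENNReal.ofReal (Real.exp (-1)) * (((m : ℝ≥0∞) ^ 3)⁻¹) ^ d := by
        rw [Real.exp_neg, ENNReal.ofReal_inv_of_pos (Real.exp_pos 1), ← ENNReal.inv_pow,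
          ← pow_mul]
        gcongr
        exact_mod_cast hE.one_le
    _ = poisson1 d * ((d.factorial : ℝ≥0∞) * (((m : ℝ≥0∞) ^ 3)⁻¹) ^ d) := by
        rw [← mul_assoc, poisson1_mul_factorial]
    _ ≤ poisson1 d * swapKpow m d E Eo := by
        gcongr; exact factorial_mul_inv_pow_le_swapKpow d hE hEo.1 rfl
    _ ≤ treeMut m E Eo := ENNReal.le_tsum d
    _ ≤ ∑' E', if OptTree c Vc E' then treeMut m E E' else 0 := by
        simpa [hEo] using
          ENNReal.le_tsum (f := fun E' => if OptTree c Vc E' then treeMut m E E' else 0) Eo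

end TreeEA

lemma one_sub_ofReal_pow_lt_ofReal_exp_neg {s k : ℝ} {N : ℕ} (hs : 0 < s) (hs1 : s ≤ 1)
    (hk : 0 < k) (hkN : k ≤ N * s) :
    (1 - ENNReal.ofReal s) ^ N < ENNReal.ofReal (Real.exp (-k)) := by
  have hN : N ≠ 0 := by
    rintro rfl
    simp only [CharP.cast_eq_zero, zero_mul] at hkN
    linarith
  have hlt : (1 - s) ^ N < Real.exp (-k) :=
    calc (1 - s) ^ N < Real.exp (-s) ^ N := by
          refine pow_lt_pow_left₀ ?_ (by linarith) hN
          linarith [Real.add_one_lt_exp (neg_ne_zero.mpr hs.ne')]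
      _ = Real.exp (-(N * s)) := by rw [← Real.exp_nat_mul]; ring_nf
      _ ≤ Real.exp (-k) := Real.exp_le_exp.mpr (by linarith)
  rw [← ENNReal.ofReal_one, ← ENNReal.ofReal_sub _ hs.le, ← ENNReal.ofReal_pow (by linarith)]
  exact (ENNReal.ofReal_lt_ofReal_iff (Real.exp_pos _)).mpr hlt

-- at `m = 0` the exponent `3 * (m - 1)` truncates to `0`
lemma one_le_pow_three_mul_sub_one (m : ℕ) : 1 ≤ (m : ℝ) ^ (3 * (m - 1)) := by
  rcases m with _ | m
  · simp
  · exact one_le_pow₀ (by simp)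

theorem treeEA_upper_bound_general (m : ℕ) {V : Type}
    (Vc : Fin m → Finset V)
    (c : V → V → ℝ≥0∞)
    (μ0 : Finset (Sym2 (Fin m)) → ℝ≥0∞)
    (hμ0 : ∑' E, μ0 E = 1)
    (hsupp : ∀ E, μ0 E ≠ 0 → IsSpanningTree m E) :
    (∀ E, IsSpanningTree m E → ¬ OptTree c Vc E →
        (ENNReal.ofReal (Real.exp 1))⁻¹ * ((m : ℝ≥0∞) ^ (3 * (m - 1)))⁻¹ ≤
          ∑' E' : Finset (Sym2 (Fin m)), if OptTree c Vc E' then treeMut m E E' else 0) ∧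
    expectedOptTime μ0 (eaKernel (treeMut m) (treeValue c Vc)) (OptTree c Vc) ≤
      ENNReal.ofReal (Real.exp 1) * (m : ℝ≥0∞) ^ (3 * (m - 1)) ∧
    (∀ k : ℕ, 1 ≤ k → ∀ N : ℕ,
        Real.exp 1 * (k : ℝ) * (m : ℝ) ^ (3 * (m - 1)) ≤ (N : ℝ) →
        survival μ0 (eaKernel (treeMut m) (treeValue c Vc)) (OptTree c Vc) N <
          ENNReal.ofReal (Real.exp (-(k : ℝ)))) := by
  have hpow := one_le_pow_three_mul_sub_one m
  set s : ℝ := Real.exp (-1) / (m : ℝ) ^ (3 * (m - 1))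
  have hs : 0 < s := by positivity
  have hs1 : s ≤ 1 :=
    div_le_one_of_le₀ ((Real.exp_le_one_iff.mpr (by norm_num)).trans hpow) (by positivity)
  have hs_eq : (ENNReal.ofReal (Real.exp 1))⁻¹ * ((m : ℝ≥0∞) ^ (3 * (m - 1)))⁻¹ =
      ENNReal.ofReal s := by
    rw [ENNReal.ofReal_div_of_pos (by positivity), Real.exp_neg,
      ENNReal.ofReal_inv_of_pos (Real.exp_pos 1), ENNReal.ofReal_pow (by positivity),
      ENNReal.ofReal_natCast, div_eq_mul_inv]
  have hsurv : ∀ t, survival μ0 (eaKernel (treeMut m) (treeValue c Vc)) (OptTree c Vc) t ≤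
      (1 - ENNReal.ofReal s) ^ t :=
    survival_eaKernel_le_one_sub_pow _ _ μ0 hμ0.le hsupp tsum_treeMut_le_one
      (fun _ _ hE h => hE.of_treeMut_ne_zero h) (fun E _ hE hE' => hE'.2 E hE)
      (fun _ hE _ => hs_eq ▸ hE.inv_exp_mul_inv_pow_le_tsum_treeMut c Vc)
  refine ⟨fun E hE _ => hE.inv_exp_mul_inv_pow_le_tsum_treeMut c Vc, ?_, fun k hk N hN => ?_⟩
  · calc _ ≤ (ENNReal.ofReal s)⁻¹ :=
          expectedOptTime_le_inv μ0 _ (ENNReal.ofReal_le_one.mpr hs1) hsurv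
      _ = _ := by rw [← hs_eq, ENNReal.mul_inv (by simp) (by simp), inv_inv, inv_inv]
  · refine (hsurv N).trans_lt (one_sub_ofReal_pow_lt_ofReal_exp_neg hs hs1 (by positivity) ?_)
    calc (k : ℝ) = Real.exp 1 * k * (m : ℝ) ^ (3 * (m - 1)) * s := by
          simp only [s, Real.exp_neg]; field_simp
      _ ≤ N * s := by gcongr

/-- For any instance of the generalised minimum spanning tree problem with `m`
clusters, the tree-based (1+1) EA (global structure representation) satisfies: from any
non-optimal spanning tree of the cluster graph, the probability that a single mutation step
produces an optimal spanning tree is at least `(1/e) * m^{-3(m-1)}`; consequently, for any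
initial distribution over spanning trees, the expected optimization time is at most
`e * m^{3(m-1)}` (hence `O(m^{3(m-1)})`, so the tree-based (1+1) EA is a fixed-parameter
evolutionary algorithm for GMSTP w.r.t. the parameter `m`); furthermore, for any `k ≥ 1`,
the probability that an optimal solution has not been found within `e * k * m^{3(m-1)}`
iterations is less than `exp(-k)`. -/
theorem treeEA_upper_bound (m : ℕ) (hm : 1 ≤ m) {V : Type} [Fintype V] [DecidableEq V]
    (Vc : Fin m → Finset V)
    (hne : ∀ i, (Vc i).Nonempty)
    (hdisj : ∀ i j, i ≠ j → Disjoint (Vc i) (Vc j))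
    (hcover : ∀ v : V, ∃ i, v ∈ Vc i)
    (c : V → V → ℝ≥0∞)
    (hsym : ∀ a b, c a b = c b a)
    (hpos : ∀ a b, a ≠ b → 0 < c a b)
    (μ0 : Finset (Sym2 (Fin m)) → ℝ≥0∞)
    (hμ0 : ∑' E, μ0 E = 1)
    (hsupp : ∀ E, μ0 E ≠ 0 → IsSpanningTree m E) :
    (∀ E, IsSpanningTree m E → ¬ OptTree c Vc E →
        (ENNReal.ofReal (Real.exp 1))⁻¹ * ((m : ℝ≥0∞) ^ (3 * (m - 1)))⁻¹ ≤
          ∑' E' : Finset (Sym2 (Fin m)), if OptTree c Vc E' then treeMut m E E' else 0) ∧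
    expectedOptTime μ0 (eaKernel (treeMut m) (treeValue c Vc)) (OptTree c Vc) ≤
      ENNReal.ofReal (Real.exp 1) * (m : ℝ≥0∞) ^ (3 * (m - 1)) ∧
    (∀ k : ℕ, 1 ≤ k → ∀ N : ℕ,
        Real.exp 1 * (k : ℝ) * (m : ℝ) ^ (3 * (m - 1)) ≤ (N : ℝ) →
        survival μ0 (eaKernel (treeMut m) (treeValue c Vc)) (OptTree c Vc) N <
          ENNReal.ofReal (Real.exp (-(k : ℝ)))) :=
  treeEA_upper_bound_general m Vc c μ0 hμ0 hsupp
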